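/- Let n be even and positive, let A be a submodule of V with finrank A = n/2, and let r : V⧸A → V and r' : V⧸A^⊥ → V be sections of the quotient maps. Then, as functions on V × V, ∑_{(c,c') ∈ (V⧸A) × (V⧸A^⊥)} |A_{r(c),r'(c')}⟩(x) · |A_{r(c),r'(c')}⟩(y) equals the indicator of x = y; equivalently, ∑_{(c,c')} |A_{r(c),r'(c')}⟩ ⊗ |A_{r(c),r'(c')}⟩ = ∑_{v ∈ V} e_v ⊗ e_v. In particular this sum is independent of A and is (an unnormalized) EPR state. -/

import Mathlib

open scoped BigOperators Kronecker Classical ComplexOrder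

noncomputable section

/-- The vector space `F₂ⁿ`. -/
abbrev V (n : ℕ) : Type := Fin n → ZMod 2

/-- The standard bilinear pairing `⟨x,y⟩ = ∑ i, xᵢ * yᵢ` on `F₂ⁿ`. -/
def pairing {n : ℕ} (x y : V n) : ZMod 2 := ∑ i, x i * y i

/-- `(−1)^b ∈ ℂ` for `b : ZMod 2`. -/
def sign (b : ZMod 2) : ℂ := if b = 0 then 1 else -1

lemma pairing_add_right {n : ℕ} (x y z : V n) :
    pairing x (y + z) = pairing x y + pairing x z := by
  simp [pairing, mul_add, Finset.sum_add_distrib]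

lemma pairing_smul_right {n : ℕ} (c : ZMod 2) (x y : V n) :
    pairing x (c • y) = c * pairing x y := by
  simp only [pairing, Pi.smul_apply, smul_eq_mul, Finset.mul_sum]
  exact Finset.sum_congr rfl fun i _ => by ring

/-- The orthogonal complement `A^⊥ = {y | ∀ a ∈ A, ⟨a,y⟩ = 0}`. -/
def perp {n : ℕ} (A : Submodule (ZMod 2) (V n)) : Submodule (ZMod 2) (V n) where
  carrier := {y | ∀ a ∈ A, pairing a y = 0}
  zero_mem' := by
    simp only [Set.mem_setOf_eq]
    intro a _
    simp [pairing]
  add_mem' := by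
    intro y z hy hz
    simp only [Set.mem_setOf_eq] at *
    intro a ha
    rw [pairing_add_right, hy a ha, hz a ha, add_zero]
  smul_mem' := by
    intro c y hy
    simp only [Set.mem_setOf_eq] at *
    intro a ha
    rw [pairing_smul_right, hy a ha, mul_zero]

/-- The coset `A + s = {a + s : a ∈ A}`. -/
def coset {n : ℕ} (A : Submodule (ZMod 2) (V n)) (s : V n) : Set (V n) :=
  {v | ∃ a ∈ A, v = a + s}

noncomputable instance {n : ℕ} (A : Submodule (ZMod 2) (V n)) : Fintype A :=
  Fintype.ofFinite _

/-- The coset state `|A_{s,s'}⟩ = |A|^{−1/2} ∑_{a ∈ A} (−1)^{⟨a,s'⟩} e_{a+s}`. -/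
noncomputable def cosetState {n : ℕ} (A : Submodule (ZMod 2) (V n)) (s s' : V n) :
    EuclideanSpace ℂ (V n) :=
  ((Real.sqrt (Nat.card A) : ℂ))⁻¹ •
    ∑ a : A, sign (pairing (a : V n) s') • EuclideanSpace.single ((a : V n) + s) (1 : ℂ)

/-- A family of orthogonal projections: each member is Hermitian and idempotent. -/
def IsProjFamily {ι m : Type*} [Fintype m] (P : ι → Matrix m m ℂ) : Prop :=
  ∀ p, (P p).IsHermitian ∧ P p * P p = P p

/-- Coset invariance of a family indexed by pairs `(s, s')`:
the value depends only on the pair of cosets `(A + s, A^⊥ + s')`. -/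
def CosetInvariant {n : ℕ} {α : Type*} (A : Submodule (ZMod 2) (V n))
    (F : V n × V n → α) : Prop :=
  ∀ s₁ s₁' s₂ s₂' : V n, coset A s₁ = coset A s₂ →
    coset (perp A) s₁' = coset (perp A) s₂' → F (s₁, s₁') = F (s₂, s₂')

/-- The rank-one matrix `|A_{s,s'}⟩⟨A_{s,s'}|`. -/
noncomputable def outer {n : ℕ} (A : Submodule (ZMod 2) (V n)) (s s' : V n) :
    Matrix (V n) (V n) ℂ :=
  Matrix.of fun x y => cosetState A s s' x * (starRingEnd ℂ) (cosetState A s s' y)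

/-- `Π^A[P,Q] = 2^{−n} ∑_{s,s'} |A_{s,s'}⟩⟨A_{s,s'}| ⊗ P(s,s') ⊗ Q(s,s')`. -/
noncomputable def PiMat {n : ℕ} {I J : Type*} [Fintype I] [Fintype J]
    (A : Submodule (ZMod 2) (V n)) (P : V n × V n → Matrix I I ℂ)
    (Q : V n × V n → Matrix J J ℂ) : Matrix (V n × I × J) (V n × I × J) ℂ :=
  ((2 : ℂ) ^ n)⁻¹ • ∑ s : V n, ∑ s' : V n, (outer A s s') ⊗ₖ (P (s, s') ⊗ₖ Q (s, s'))

/-- The `ℓ² → ℓ²` operator norm of a complex square matrix. -/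
noncomputable def opNorm {m : Type*} [Fintype m] [DecidableEq m] (M : Matrix m m ℂ) : ℝ :=
  ‖Matrix.toEuclideanCLM (𝕜 := ℂ) M‖

noncomputable instance {n : ℕ} (A : Submodule (ZMod 2) (V n)) : Fintype (V n ⧸ A) :=
  @Fintype.ofFinite _ (Finite.of_surjective (Submodule.Quotient.mk (p := A))
    (Submodule.Quotient.mk_surjective A))


/-!
The `x`- and `y`-coordinates of `|A_{s,s'}⟩` multiply to `|A|⁻¹ (−1)^{⟨x−y,s'⟩}` when `x` and `y`
both lie in `A + s`, and to `0` otherwise. Summing over the coset `c` of `s` keeps only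
`c = x + A` and forces `x − y ∈ A`. For `w ∈ A` the map `s' ↦ (−1)^{⟨w,s'⟩}` is a character of
`V ⧸ A^⊥`, trivial only when `w = 0` because the dot product is nondegenerate; so the remaining
sum over `c'` is `|V ⧸ A^⊥| = |A|` if `x = y` and `0` otherwise.
-/

open Module

def signChar : AddChar (ZMod 2) ℂ where
  toFun := sign
  map_zero_eq_one' := by simp [sign]
  map_add_eq_mul' a b := by
    obtain rfl | rfl : a = 0 ∨ a = 1 := by revert a; decide
    all_goals obtain rfl | rfl : b = 0 ∨ b = 1 := by revert b; decide
    all_goals simp [sign]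
    all_goals decide

lemma signChar_eq_one_iff {b : ZMod 2} : signChar b = 1 ↔ b = 0 := by
  obtain rfl | rfl : b = 0 ∨ b = 1 := by revert b; decide
  all_goals norm_num [signChar, sign]

lemma sign_mul_sign (a b : ZMod 2) : sign a * sign b = sign (a - b) := by
  rw [CharTwo.sub_eq_add]
  exact (signChar.map_add_eq_mul a b).symm

lemma sum_sign_eq_ite {G : Type*} [AddGroup G] [Fintype G] (f : G →+ ZMod 2) :
    ∑ g, sign (f g) = if f = 0 then (Fintype.card G : ℂ) else 0 := by
  have hψ : signChar.compAddMonoidHom f = 0 ↔ f = 0 := by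
    rw [AddChar.eq_zero_iff, DFunLike.ext_iff]
    exact forall_congr' fun g => signChar_eq_one_iff
  exact (AddChar.sum_eq_ite _).trans (if_congr hψ rfl rfl)

lemma dotProductBilin_nondegenerate {R m : Type*} [CommRing R] [Fintype m] [DecidableEq m] :
    (dotProductBilin R R : LinearMap.BilinForm R (m → R)).Nondegenerate :=
  ⟨fun v hv => funext fun i => by simpa using hv (Pi.single i 1),
    fun v hv => funext fun i => by simpa using hv (Pi.single i 1)⟩

lemma perp_eq_orthogonal {n : ℕ} (A : Submodule (ZMod 2) (V n)) :
    perp A = LinearMap.BilinForm.orthogonal (dotProductBilin (ZMod 2) (ZMod 2)) A := rfl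

lemma finrank_quotient_perp {n : ℕ} (A : Submodule (ZMod 2) (V n)) :
    finrank (ZMod 2) (V n ⧸ perp A) = finrank (ZMod 2) A := by
  rw [Submodule.finrank_quotient, perp_eq_orthogonal,
    LinearMap.BilinForm.finrank_orthogonal dotProductBilin_nondegenerate]
  have := Submodule.finrank_le A
  lia

lemma natCard_quotient_perp {n : ℕ} (A : Submodule (ZMod 2) (V n)) :
    Nat.card (V n ⧸ perp A) = Nat.card A := by
  rw [natCard_eq_pow_finrank (K := ZMod 2), natCard_eq_pow_finrank (K := ZMod 2) (V := A),
    finrank_quotient_perp]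

lemma sum_sign_pairing_section {n : ℕ} (A : Submodule (ZMod 2) (V n)) {w : V n} (hw : w ∈ A)
    (r' : V n ⧸ perp A → V n)
    (hr' : ∀ c : V n ⧸ perp A, (Submodule.Quotient.mk (r' c) : V n ⧸ perp A) = c) :
    ∑ c, sign (pairing w (r' c)) = if w = 0 then (Nat.card A : ℂ) else 0 := by
  let f := (perp A).liftQ (dotProductBilin (ZMod 2) (ZMod 2) w) fun y hy => hy w hw
  have hf : ∀ c, pairing w (r' c) = f.toAddMonoidHom c := fun c => by
    conv_rhs => rw [← hr' c]
    rfl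
  have hf0 : f.toAddMonoidHom = 0 ↔ w = 0 := by
    refine ⟨fun h => dotProductBilin_nondegenerate.1 w fun y => ?_, ?_⟩
    · exact DFunLike.congr_fun h (Submodule.Quotient.mk y)
    · rintro rfl
      ext c
      obtain ⟨y, rfl⟩ := Submodule.Quotient.mk_surjective _ c
      simp [f]
  simp only [hf]
  rw [sum_sign_eq_ite, ← natCard_quotient_perp, Nat.card_eq_fintype_card]
  exact if_congr hf0 rfl rfl

lemma cosetState_apply {n : ℕ} (A : Submodule (ZMod 2) (V n)) (s s' x : V n) :
    cosetState A s s' x = ((Real.sqrt (Nat.card A) : ℂ))⁻¹ *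
      if x - s ∈ A then sign (pairing (x - s) s') else 0 := by
  have hx : ∀ a : A, x = a + s ↔ a = x - s := fun a => eq_comm.trans eq_sub_iff_add_eq.symm
  simp only [cosetState, PiLp.smul_apply, WithLp.ofLp_sum, Finset.sum_apply, PiLp.single_apply,
    smul_eq_mul, mul_ite, mul_one, mul_zero, hx]
  split_ifs with h
  · rw [Fintype.sum_eq_single ⟨x - s, h⟩ fun a ha => if_neg fun h' => ha (Subtype.ext h'),
      if_pos rfl]
  · rw [Finset.sum_eq_zero fun (a : A) _ => if_neg fun h' => h (by rw [← h']; exact a.2),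
      mul_zero]

lemma cosetState_mul_cosetState_apply {n : ℕ} (A : Submodule (ZMod 2) (V n)) (s s' x y : V n) :
    cosetState A s s' x * cosetState A s s' y =
      if x - s ∈ A ∧ y - s ∈ A then (Nat.card A : ℂ)⁻¹ * sign (pairing (x - y) s') else 0 := by
  have hnorm : ((Real.sqrt (Nat.card A) : ℂ))⁻¹ * ((Real.sqrt (Nat.card A) : ℂ))⁻¹
      = (Nat.card A : ℂ)⁻¹ := by
    rw [← mul_inv, ← Complex.ofReal_mul, Real.mul_self_sqrt (Nat.cast_nonneg _),
      Complex.ofReal_natCast]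
  have hpair : pairing (x - s) s' - pairing (y - s) s' = pairing (x - y) s' :=
    (sub_dotProduct _ _ _).symm.trans (by rw [sub_sub_sub_cancel_right]; rfl)
  rw [cosetState_apply, cosetState_apply]
  by_cases hx : x - s ∈ A <;> by_cases hy : y - s ∈ A <;>
    simp only [hx, hy, and_self, and_false, false_and, if_true, if_false, mul_zero, zero_mul]
  rw [mul_mul_mul_comm, hnorm, sign_mul_sign, hpair]

lemma Submodule.sum_ite_mk_eq_and_mk_eq {R M β : Type*} [Ring R] [AddCommGroup M] [Module R M]
    (p : Submodule R M) [Fintype (M ⧸ p)] [AddCommMonoid β] (x y : M) (b : β) :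
    ∑ c : M ⧸ p, (if Submodule.Quotient.mk x = c ∧ Submodule.Quotient.mk y = c then b else 0) =
      if x - y ∈ p then b else 0 := by
  simp [ite_and, Submodule.Quotient.eq, sub_mem_comm_iff]

theorem sum_cosetState_tensor_eq_EPR_general
    {n : ℕ}
    (A : Submodule (ZMod 2) (V n))
    (r : (V n ⧸ A) → V n)
    (hr : ∀ c : V n ⧸ A, (Submodule.Quotient.mk (r c) : V n ⧸ A) = c)
    (r' : (V n ⧸ perp A) → V n)
    (hr' : ∀ c : V n ⧸ perp A, (Submodule.Quotient.mk (r' c) : V n ⧸ perp A) = c)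
    (x y : V n) :
    ∑ c : V n ⧸ A, ∑ c' : V n ⧸ perp A,
        cosetState A (r c) (r' c') x * cosetState A (r c) (r' c') y
      = if x = y then 1 else 0 := by
  have hmem : ∀ (v : V n) (c : V n ⧸ A), v - r c ∈ A ↔ Submodule.Quotient.mk v = c := by
    intro v c
    rw [← Submodule.Quotient.eq, hr]
  simp only [cosetState_mul_cosetState_apply, hmem]
  rw [Finset.sum_comm]
  simp only [Submodule.sum_ite_mk_eq_and_mk_eq, Finset.sum_ite_irrel, Finset.sum_const_zero,
    ← Finset.mul_sum]
  by_cases hxy : x - y ∈ A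
  · rw [if_pos hxy, sum_sign_pairing_section A hxy r' hr']
    simp only [sub_eq_zero]
    split_ifs
    · exact inv_mul_cancel₀ (Nat.cast_ne_zero.2 Nat.card_pos.ne')
    · exact mul_zero _
  · rw [if_neg hxy, if_neg fun h => hxy (by rw [h, sub_self]; exact A.zero_mem)]

/-- Summing `|A_{r c, r' c'}⟩ ⊗ |A_{r c, r' c'}⟩` over one representative per pair of cosets
gives the (unnormalized) EPR state `∑ v, e_v ⊗ e_v`, independently of `A`. -/
theorem sum_cosetState_tensor_eq_EPR
    {n : ℕ} (hn : 0 < n) (hne : Even n)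
    (A : Submodule (ZMod 2) (V n)) (hA : Module.finrank (ZMod 2) A = n / 2)
    (r : (V n ⧸ A) → V n)
    (hr : ∀ c : V n ⧸ A, (Submodule.Quotient.mk (r c) : V n ⧸ A) = c)
    (r' : (V n ⧸ perp A) → V n)
    (hr' : ∀ c : V n ⧸ perp A, (Submodule.Quotient.mk (r' c) : V n ⧸ perp A) = c)
    (x y : V n) :
    ∑ c : V n ⧸ A, ∑ c' : V n ⧸ perp A,
        cosetState A (r c) (r' c') x * cosetState A (r c) (r' c') y
      = if x = y then 1 else 0 :=
  sum_cosetState_tensor_eq_EPR_general A r hr r' hr' x y
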